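/- arXiv:2011.14312 — 2 statements merged into one kernel-verified Lean document; each statement's English description precedes it below -/
import Mathlib

section
/- Let Ω° ⊆ ℝ^n be convex, U ∈ ℝ^n an upper bound such that every Y ∈ Ω° satisfies Y ≤ U, let W ≤ 0 componentwise, X̃ ∈ Ω°, V ∈ ℝ^n with ⟨W, U − X̃ − V⟩ ≥ −‖W‖·‖V‖ where X̃ = X + V and ⟨W, U − X⟩ = 0. Then −W ∈ ∂_ν δ_{Ω°}(X̃) for ν = ‖W‖·‖V‖, i.e., for every Y ∈ Ω°, ⟨−W, Y − X̃⟩ ≤ ν. -/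
theorem EuclideanSpace.inner_nonpos_of_nonpos_of_nonneg {ι : Type*} [Fintype ι]
    {a b : EuclideanSpace ℝ ι} (ha : ∀ i, a i ≤ 0) (hb : ∀ i, 0 ≤ b i) :
    inner ℝ a b ≤ 0 := by
  rw [PiLp.inner_apply]
  exact Finset.sum_nonpos fun i _ => by
    simpa [mul_comm] using mul_nonpos_of_nonpos_of_nonneg (ha i) (hb i)

theorem neg_inner_sub_add_le_norm_mul_norm {E : Type*} [NormedAddCommGroup E]
    [InnerProductSpace ℝ E] {u w x v y : E} (hcomp : inner ℝ w (u - x) = 0)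
    (hy : inner ℝ w (u - y) ≤ 0) :
    inner ℝ (-w) (y - (x + v)) ≤ ‖w‖ * ‖v‖ := by
  have hdecomp : inner ℝ (-w) (y - (x + v))
      = inner ℝ w v - inner ℝ w (u - x) + inner ℝ w (u - y) := by
    simp only [inner_neg_left, inner_sub_right, inner_add_right]
    ring
  rw [hdecomp, hcomp]
  linarith [real_inner_le_norm w v]

theorem stmt13_general (n : ℕ) (Ω : Set (EuclideanSpace ℝ (Fin n)))
    (U W X V Xt : EuclideanSpace ℝ (Fin n))
    (hub : ∀ Y ∈ Ω, ∀ i, Y i ≤ U i)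
    (hW : ∀ i, W i ≤ 0)
    (hXtdef : Xt = X + V)
    (hcomp : (inner ℝ W (U - X) : ℝ) = 0) :
    ∀ Y ∈ Ω, (inner ℝ (-W) (Y - Xt) : ℝ) ≤ ‖W‖ * ‖V‖ := by
  intro Y hY
  subst hXtdef
  refine neg_inner_sub_add_le_norm_mul_norm hcomp ?_
  refine EuclideanSpace.inner_nonpos_of_nonpos_of_nonneg hW fun i => ?_
  simpa using hub Y hY i

/-- with Ω° convex, every Y ∈ Ω° satisfying Y ≤ U, W ≤ 0, X̃ = X + V ∈ Ω°,
complementarity ⟨W, U − X⟩ = 0, and ⟨W, U − X̃ − V⟩ ≥ −‖W‖‖V‖, one has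
−W ∈ ∂_ν δ_{Ω°}(X̃) with ν = ‖W‖·‖V‖, i.e. ⟨−W, Y − X̃⟩ ≤ ν for all Y ∈ Ω°. -/
theorem stmt13 (n : ℕ) (Ω : Set (EuclideanSpace ℝ (Fin n)))
    (U W X V Xt : EuclideanSpace ℝ (Fin n))
    (hconv : Convex ℝ Ω)
    (hub : ∀ Y ∈ Ω, ∀ i, Y i ≤ U i)
    (hW : ∀ i, W i ≤ 0)
    (hXt : Xt ∈ Ω) (hXtdef : Xt = X + V)
    (hcomp : (inner ℝ W (U - X) : ℝ) = 0)
    (hlb : (inner ℝ W (U - Xt - V) : ℝ) ≥ -(‖W‖ * ‖V‖)) :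
    ∀ Y ∈ Ω, (inner ℝ (-W) (Y - Xt) : ℝ) ≤ ‖W‖ * ‖V‖ :=
  stmt13_general n Ω U W X V Xt hub hW hXtdef hcomp
end

section
/- Consider the iEPPA iteration: let Ω ⊆ ℝ^n_{≥0} be compact convex with ‖X‖ ≤ ρ for all X ∈ Ω, X̃^{k}, X̃^{k+1} ∈ Ω, X^k, X^{k+1} ∈ ℝ^n_{>0}, ε_k > 0, and suppose there exists D^{k+1} ∈ ∂_{ν_k} δ_{Ω°}(X̃^{k+1}) with Δ^k = D^{k+1} + C + ε_k(∇φ(X^{k+1}) − ∇φ(X^k)), ‖Δ^k‖ ≤ η_k, and D_φ(X̃^{k+1}, X^{k+1}) ≤ μ_k, where Ω ⊆ Ω°. Then for every P ∈ Ω: ⟨C, X̃^{k+1}⟩ ≤ ⟨C, P⟩ + ε_k(D_φ(P, X^k) − D_φ(P, X^{k+1}) − D_φ(X̃^{k+1}, X^k)) + ε_k μ_k + 2ρ η_k + ν_k. -/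
/-!
Pair the error `Δ = D + C + ε G` with `X̃ - P`. The `ν`-subgradient inequality bounds the `D`-part,
Cauchy–Schwarz with `‖X̃ - P‖ ≤ 2ρ` bounds the whole pairing by `2ρη`, and since
`G = ∇φ(X^{k+1}) - ∇φ(X^k)` the `G`-part is a combination of four Bregman distances (the
three-points identity applied twice). The distance `D_φ(X̃, X^{k+1})` among them is at most `μ`.
-/

/-- Bregman distance of the Boltzmann–Shannon entropy. -/
noncomputable def DphiE {n : ℕ} (X Y : EuclideanSpace ℝ (Fin n)) : ℝ :=
  ∑ i, (X i * Real.log (X i / Y i) - X i + Y i)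

open Finset Real

section Bregman

variable {n : ℕ}

lemma DphiE_sub_DphiE (P X Y : EuclideanSpace ℝ (Fin n))
    (hX : ∀ i, X i ≠ 0) (hY : ∀ i, Y i ≠ 0) :
    DphiE P X - DphiE P Y = ∑ i, P i * (log (Y i) - log (X i)) + ∑ i, (X i - Y i) := by
  unfold DphiE
  rw [← sum_sub_distrib, ← sum_add_distrib]
  refine sum_congr rfl fun i _ => ?_
  rcases eq_or_ne (P i) 0 with hP | hP
  · simp [hP]
  · rw [log_div hP (hX i), log_div hP (hY i)]
    ring

lemma inner_log_sub_log_eq_DphiE (P Q X Y G : EuclideanSpace ℝ (Fin n))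
    (hX : ∀ i, X i ≠ 0) (hY : ∀ i, Y i ≠ 0) (hG : ∀ i, G i = log (Y i) - log (X i)) :
    inner ℝ G (P - Q) = DphiE P X - DphiE P Y - (DphiE Q X - DphiE Q Y) := by
  rw [DphiE_sub_DphiE P X Y hX hY, DphiE_sub_DphiE Q X Y hX hY]
  simp only [PiLp.inner_apply, RCLike.inner_apply, conj_trivial, PiLp.sub_apply, hG]
  have hsplit : ∑ i, (P i - Q i) * (log (Y i) - log (X i))
      = ∑ i, P i * (log (Y i) - log (X i)) - ∑ i, Q i * (log (Y i) - log (X i)) := by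
    rw [← sum_sub_distrib]
    exact sum_congr rfl fun i _ => by ring
  rw [hsplit]
  ring

end Bregman

section InnerProductSpace

variable {E : Type*} [NormedAddCommGroup E] [InnerProductSpace ℝ E]

lemma inner_sub_le_of_norm_le {Δ x p : E} {ρ η : ℝ}
    (hΔ : ‖Δ‖ ≤ η) (hx : ‖x‖ ≤ ρ) (hp : ‖p‖ ≤ ρ) :
    inner ℝ Δ (x - p) ≤ 2 * ρ * η :=
  calc inner ℝ Δ (x - p) ≤ ‖Δ‖ * ‖x - p‖ := real_inner_le_norm _ _
    _ ≤ η * (ρ + ρ) :=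
      mul_le_mul hΔ ((norm_sub_le _ _).trans (add_le_add hx hp)) (norm_nonneg _)
        ((norm_nonneg _).trans hΔ)
    _ = 2 * ρ * η := by ring

lemma inner_le_of_eq_add_smul {C D G Δ x p : E} {ε b ν : ℝ}
    (hD : inner ℝ D (p - x) ≤ ν) (hΔ : Δ = D + C + ε • G) (hb : inner ℝ Δ (x - p) ≤ b) :
    inner ℝ C x ≤ inner ℝ C p + ε * inner ℝ G (p - x) + b + ν := by
  have hswap : ∀ v : E, inner ℝ v (x - p) = -inner ℝ v (p - x) := fun v => by
    rw [← inner_neg_right, neg_sub]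
  rw [hΔ, inner_add_left, inner_add_left, real_inner_smul_left, hswap D, hswap G,
    inner_sub_right C x p] at hb
  linarith

end InnerProductSpace

theorem stmt16_general (n : ℕ) (Ω Ω' : Set (EuclideanSpace ℝ (Fin n)))
    (C Xk Xk1 Xtk1 D Δ G : EuclideanSpace ℝ (Fin n))
    (ρ εk νk ηk μk : ℝ)
    (hsub : Ω ⊆ Ω')
    (hρ : ∀ X ∈ Ω, ‖X‖ ≤ ρ)
    (hXt : Xtk1 ∈ Ω)
    (hXk : ∀ i, 0 < Xk i) (hXk1 : ∀ i, 0 < Xk1 i)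
    (hεk : 0 < εk)
    (hD : ∀ Y ∈ Ω', (inner ℝ D (Y - Xtk1) : ℝ) ≤ νk)
    (hG : ∀ i, G i = Real.log (Xk1 i) - Real.log (Xk i))
    (hΔ : Δ = D + C + εk • G)
    (hη : ‖Δ‖ ≤ ηk)
    (hμ : DphiE Xtk1 Xk1 ≤ μk) :
    ∀ P ∈ Ω, (inner ℝ C Xtk1 : ℝ) ≤ (inner ℝ C P : ℝ)
      + εk * (DphiE P Xk - DphiE P Xk1 - DphiE Xtk1 Xk)
      + εk * μk + 2 * ρ * ηk + νk := by
  intro P hP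
  have hdescent := inner_le_of_eq_add_smul (hD P (hsub hP)) hΔ
    (inner_sub_le_of_norm_le hη (hρ _ hXt) (hρ _ hP))
  rw [inner_log_sub_log_eq_DphiE P Xtk1 Xk Xk1 G (fun i => (hXk i).ne')
    (fun i => (hXk1 i).ne') hG] at hdescent
  linarith [mul_le_mul_of_nonneg_left hμ hεk.le]

/-- key descent estimate of the iEPPA iteration: with Ω compact convex
contained in Ω° and in ℝⁿ₊, ‖X‖ ≤ ρ on Ω, X̃^{k+1} ∈ Ω, X^k, X^{k+1} > 0, ε_k > 0,
D ∈ ∂_{ν_k} δ_{Ω°}(X̃^{k+1}), Δ = D + C + ε_k(∇φ(X^{k+1}) − ∇φ(X^k)), ‖Δ‖ ≤ η_k and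
D_φ(X̃^{k+1}, X^{k+1}) ≤ μ_k, it holds for every P ∈ Ω that
⟨C, X̃^{k+1}⟩ ≤ ⟨C, P⟩ + ε_k(D_φ(P,X^k) − D_φ(P,X^{k+1}) − D_φ(X̃^{k+1},X^k))
  + ε_k μ_k + 2ρ η_k + ν_k. -/
theorem stmt16 (n : ℕ) (Ω Ω' : Set (EuclideanSpace ℝ (Fin n)))
    (C Xk Xk1 Xtk1 D Δ G : EuclideanSpace ℝ (Fin n))
    (ρ εk νk ηk μk : ℝ)
    (hcomp : IsCompact Ω) (hconvΩ : Convex ℝ Ω) (hsub : Ω ⊆ Ω')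
    (hconvΩ' : Convex ℝ Ω') (hclΩ' : IsClosed Ω')
    (hΩpos : ∀ X ∈ Ω, ∀ i, 0 ≤ X i)
    (hρ : ∀ X ∈ Ω, ‖X‖ ≤ ρ)
    (hXt : Xtk1 ∈ Ω)
    (hXk : ∀ i, 0 < Xk i) (hXk1 : ∀ i, 0 < Xk1 i)
    (hεk : 0 < εk)
    (hD : ∀ Y ∈ Ω', (inner ℝ D (Y - Xtk1) : ℝ) ≤ νk)
    (hG : ∀ i, G i = Real.log (Xk1 i) - Real.log (Xk i))
    (hΔ : Δ = D + C + εk • G)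
    (hη : ‖Δ‖ ≤ ηk)
    (hμ : DphiE Xtk1 Xk1 ≤ μk) :
    ∀ P ∈ Ω, (inner ℝ C Xtk1 : ℝ) ≤ (inner ℝ C P : ℝ)
      + εk * (DphiE P Xk - DphiE P Xk1 - DphiE Xtk1 Xk)
      + εk * μk + 2 * ρ * ηk + νk :=
  stmt16_general n Ω Ω' C Xk Xk1 Xtk1 D Δ G ρ εk νk ηk μk hsub hρ hXt hXk hXk1 hεk hD hG hΔ hη hμ
end
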